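/- arXiv:2510.24319 — 3 statements merged into one kernel-verified Lean document; each statement's English description precedes it below -/
import Mathlib

section
/- For β ∈ (0,2) and every real u, |u|^β = c_β ∫_0^∞ (1 - cos(2π u s)) s^{-1-β} ds, where c_β = 2^{1-β} Γ(1+β) sin(πβ/2) / π^{1+β} > 0. -/
open MeasureTheory Real Set Filter

lemma integrableOn_one_sub_cos_exp {x : ℝ} (hx : 0 < x) :
    IntegrableOn (fun t => (1 - Real.cos t) * Real.exp (-(x * t))) (Ioi (0:ℝ)) := by
  refine Integrable.mono' ((exp_neg_integrableOn_Ioi 0 hx).const_mul 2) ?_ ?_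
  · apply Measurable.aestronglyMeasurable
    fun_prop
  · filter_upwards with t
    rw [Real.norm_eq_abs, abs_mul, abs_of_nonneg (Real.exp_pos _).le]
    have h1 : |1 - Real.cos t| ≤ 2 := by
      rw [abs_le]; constructor <;> nlinarith [Real.neg_one_le_cos t, Real.cos_le_one t]
    calc |1 - Real.cos t| * Real.exp (-(x * t)) ≤ 2 * Real.exp (-(x * t)) := by
          exact mul_le_mul_of_nonneg_right h1 (Real.exp_pos _).le
      _ = 2 * Real.exp (-x * t) := by ring_nf

lemma laplace_one_sub_cos {x : ℝ} (hx : 0 < x) :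
    ∫ t in Ioi (0:ℝ), (1 - Real.cos t) * Real.exp (-(x * t)) = 1 / x - x / (1 + x ^ 2) := by
  have h1x : (0:ℝ) < 1 + x ^ 2 := by positivity
  set H : ℝ → ℝ := fun t =>
    -Real.exp (-(x * t)) / x - Real.exp (-(x * t)) * (-x * Real.cos t + Real.sin t) / (1 + x ^ 2)
    with hH
  have hderiv : ∀ t : ℝ, HasDerivAt H ((1 - Real.cos t) * Real.exp (-(x * t))) t := by
    intro t
    have he : HasDerivAt (fun t : ℝ => Real.exp (-(x * t))) (-x * Real.exp (-(x * t))) t := by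
      have : HasDerivAt (fun t : ℝ => -(x * t)) (-x) t := by
        simpa using ((hasDerivAt_id t).const_mul x).fun_neg
      simpa [mul_comm] using this.exp
    have hc : HasDerivAt (fun t : ℝ => -x * Real.cos t + Real.sin t)
        (-x * (-Real.sin t) + Real.cos t) t :=
      ((Real.hasDerivAt_cos t).const_mul (-x)).add (Real.hasDerivAt_sin t)
    have := ((he.fun_neg.div_const x).fun_sub (((he.fun_mul hc).div_const (1 + x ^ 2))))
    refine this.congr_deriv ?_
    field_simp
    ring
  have hint := integrableOn_one_sub_cos_exp hx
  clear_value H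
  have htend : Tendsto H atTop (nhds 0) := by
    have he : Tendsto (fun t : ℝ => Real.exp (-(x * t))) atTop (nhds 0) := by
      apply Real.tendsto_exp_atBot.comp
      exact tendsto_neg_atBot_iff.mpr (tendsto_id.const_mul_atTop hx)
    have h1 : Tendsto (fun t : ℝ => -Real.exp (-(x * t)) / x) atTop (nhds 0) := by
      simpa using (he.neg.div_const x)
    have h2 : Tendsto (fun t : ℝ =>
        Real.exp (-(x * t)) * (-x * Real.cos t + Real.sin t) / (1 + x ^ 2)) atTop (nhds 0) := by
      have hb : Tendsto (fun t : ℝ => Real.exp (-(x * t)) * (-x * Real.cos t + Real.sin t))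
          atTop (nhds 0) := by
        refine squeeze_zero_norm ?_ (by simpa using he.mul_const (|x| + 1))
        · intro t
          rw [Real.norm_eq_abs, abs_mul, abs_of_nonneg (Real.exp_pos _).le]
          gcongr
          calc |(-x * Real.cos t + Real.sin t)| ≤ |(-x * Real.cos t)| + |Real.sin t| := abs_add_le _ _
            _ ≤ |x| * 1 + 1 := by
                rw [abs_mul, abs_neg]
                gcongr
                · exact Real.abs_cos_le_one t
                · exact Real.abs_sin_le_one t
            _ = |x| + 1 := by ring
      simpa using hb.div_const (1 + x ^ 2)
    simpa [hH] using h1.sub h2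
  have := integral_Ioi_of_hasDerivAt_of_tendsto' (f := H)
    (f' := fun t => (1 - Real.cos t) * Real.exp (-(x * t)))
    (fun t _ => hderiv t) hint htend
  rw [this, hH]
  simp only [mul_zero, neg_zero, Real.exp_zero, Real.cos_zero, Real.sin_zero]
  field_simp
  ring

-- integral of exp(-(c*y)) over Ioi 0
lemma int_exp_inv {c : ℝ} (hc : 0 < c) :
    ∫ y in Ioi (0:ℝ), Real.exp (-(c * y)) = 1 / c := by
  have := integral_rpow_mul_exp_neg_mul_Ioi (a := 1) one_pos hc
  simpa [Real.Gamma_one] using this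

-- Lemma C
lemma int_rpow_exp {β t : ℝ} (hβ : 0 < β) (ht : 0 < t) :
    ∫ x in Ioi (0:ℝ), x ^ β * Real.exp (-(t * x)) = Real.Gamma (1 + β) * t ^ (-1 - β) := by
  have := integral_rpow_mul_exp_neg_mul_Ioi (a := 1 + β) (by linarith) ht
  rw [show (1:ℝ) + β - 1 = β by ring] at this
  rw [this, one_div, ← Real.rpow_neg_one t, ← Real.rpow_mul ht.le]
  rw [mul_comm, show (-1:ℝ) * (1+β) = -1-β by ring]

lemma int_rpow_exp_integrable {β t : ℝ} (hβ : 0 < β) (ht : 0 < t) :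
    IntegrableOn (fun x => x ^ β * Real.exp (-(t * x))) (Ioi (0:ℝ)) := by
  have h := integrableOn_rpow_mul_exp_neg_mul_rpow (s := β) (p := 1) (b := t)
    (by linarith) one_pos ht
  refine h.congr_fun (fun x hx => ?_) measurableSet_Ioi
  simp only [Real.rpow_one, neg_mul]


lemma fubiniD {β : ℝ} (hβ0 : 0 < β) (hβ2 : β < 2) :
    IntegrableOn (fun x : ℝ => x ^ (β-1) / (1 + x ^ 2)) (Ioi (0:ℝ)) ∧
    ∫ x in Ioi (0:ℝ), x ^ (β-1) / (1 + x ^ 2) = π / (2 * Real.sin (π * β / 2)) := by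
  have hs₀ : 0 < 1 - β/2 := by linarith
  have hb2 : 0 < β/2 := by linarith
  set C : ℝ := 1/2 * Real.Gamma (β/2) with hC
  set f : ℝ → ℝ → ℝ := fun y x => x ^ (β-1) * Real.exp (-((1 + x ^ 2) * y)) with hf
  have hmeas : AEStronglyMeasurable (Function.uncurry f)
      ((volume.restrict (Ioi (0:ℝ))).prod (volume.restrict (Ioi (0:ℝ)))) := by
    apply Measurable.aestronglyMeasurable
    fun_prop
  have hnonneg : ∀ (y : ℝ) (x : ℝ), 0 ≤ x → 0 ≤ f y x := by
    intro y x hx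
    exact mul_nonneg (Real.rpow_nonneg hx _) (Real.exp_pos _).le
  -- congruence of integrand for fixed y > 0
  have hcong : ∀ y : ℝ, 0 < y → ∀ x ∈ Ioi (0:ℝ),
      f y x = Real.exp (-y) * (x ^ (β-1) * Real.exp (-y * x ^ (2:ℝ))) := by
    intro y hy x hx
    rw [hf]
    simp only
    rw [Real.rpow_two, show -((1 + x^2) * y) = -y + (-y * x^2) by ring, Real.exp_add]
    ring
  have hintx : ∀ y : ℝ, 0 < y → IntegrableOn (fun x => f y x) (Ioi (0:ℝ)) := by
    intro y hy
    have := ((integrableOn_rpow_mul_exp_neg_mul_rpow (s := β-1) (p := 2) (b := y)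
      (by linarith) two_pos hy).const_mul (Real.exp (-y)))
    exact IntegrableOn.congr_fun this (fun x hx => (hcong y hy x hx).symm) measurableSet_Ioi
  have hinner : ∀ y : ℝ, 0 < y →
      ∫ x in Ioi (0:ℝ), f y x = Real.exp (-y) * y ^ (-(β/2)) * C := by
    intro y hy
    rw [setIntegral_congr_fun measurableSet_Ioi (hcong y hy), integral_const_mul,
      integral_rpow_mul_exp_neg_mul_rpow (by norm_num) (by linarith) hy,
      show (β - 1 + 1) / 2 = β/2 by ring, show -(β - 1 + 1) / 2 = -(β/2) by ring, hC]
    ring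
  have hInt : Integrable (Function.uncurry f)
      ((volume.restrict (Ioi (0:ℝ))).prod (volume.restrict (Ioi (0:ℝ)))) := by
    refine (integrable_prod_iff hmeas).mpr ⟨?_, ?_⟩
    · filter_upwards [ae_restrict_mem measurableSet_Ioi] with y hy
      exact hintx y hy
    · have base : IntegrableOn (fun y : ℝ => Real.exp (-y) * y ^ (1 - β/2 - 1)) (Ioi 0) :=
        Real.GammaIntegral_convergent hs₀
      refine (base.mul_const C).congr ?_
      filter_upwards [ae_restrict_mem measurableSet_Ioi] with y hy
      rw [show (1:ℝ) - β/2 - 1 = -(β/2) by ring]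
      rw [show ∫ x, ‖Function.uncurry f (y, x)‖ ∂(volume.restrict (Ioi (0:ℝ)))
          = ∫ x in Ioi (0:ℝ), f y x from
        integral_congr_ae (by
          filter_upwards [ae_restrict_mem measurableSet_Ioi] with x hx
          simp [Function.uncurry, Real.norm_eq_abs, abs_of_nonneg (hnonneg y x (le_of_lt hx))])]
      rw [hinner y hy]
  have hswap := integral_integral_swap hInt
  have hL : ∫ y in Ioi (0:ℝ), ∫ x in Ioi (0:ℝ), f y x
      = Real.Gamma (1 - β/2) * C := by
    rw [setIntegral_congr_fun measurableSet_Ioi (fun y hy => hinner y hy)]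
    rw [show (fun y => Real.exp (-y) * y ^ (-(β/2)) * C)
        = fun y => (Real.exp (-y) * y ^ (1 - β/2 - 1)) * C from by
      funext y; rw [show (1:ℝ) - β/2 - 1 = -(β/2) by ring]]
    rw [integral_mul_const, ← Real.Gamma_eq_integral hs₀]
  have hR : ∀ x ∈ Ioi (0:ℝ), ∫ y in Ioi (0:ℝ), f y x = x ^ (β-1) / (1 + x ^ 2) := by
    intro x hx
    have hc : (0:ℝ) < 1 + x ^ 2 := by positivity
    rw [hf]
    simp only
    rw [integral_const_mul, int_exp_inv hc]
    rw [mul_one_div]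
  have key : ∫ x in Ioi (0:ℝ), x ^ (β-1) / (1 + x ^ 2) = Real.Gamma (1 - β/2) * C := by
    rw [← hL, hswap, setIntegral_congr_fun measurableSet_Ioi hR]
  have hval : Real.Gamma (1 - β/2) * C = π / (2 * Real.sin (π * β / 2)) := by
    rw [hC, show Real.Gamma (1 - β/2) * (1/2 * Real.Gamma (β/2))
        = 1/2 * (Real.Gamma (β/2) * Real.Gamma (1 - β/2)) by ring,
      Real.Gamma_mul_Gamma_one_sub, show π * (β/2) = π * β / 2 by ring]
    ring
  refine ⟨?_, key.trans hval⟩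
  have := hInt.integral_prod_right
  refine Integrable.congr this ?_
  filter_upwards [ae_restrict_mem measurableSet_Ioi] with x hx
  exact hR x hx





lemma J_eq {β : ℝ} (hβ0 : 0 < β) (hβ2 : β < 2) :
    ∫ t in Ioi (0:ℝ), (1 - Real.cos t) * t ^ (-1 - β)
      = π / (2 * Real.Gamma (1 + β) * Real.sin (π * β / 2)) := by
  set f : ℝ → ℝ → ℝ := fun x t => (1 - Real.cos t) * (x ^ β * Real.exp (-(t * x))) with hf
  have hmeas : AEStronglyMeasurable (Function.uncurry f)
      ((volume.restrict (Ioi (0:ℝ))).prod (volume.restrict (Ioi (0:ℝ)))) := by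
    apply Measurable.aestronglyMeasurable
    fun_prop
  have hnonneg : ∀ x t : ℝ, 0 ≤ x → 0 ≤ f x t := by
    intro x t hx
    have h1 : 0 ≤ 1 - Real.cos t := by nlinarith [Real.cos_le_one t]
    exact mul_nonneg h1 (mul_nonneg (Real.rpow_nonneg hx _) (Real.exp_pos _).le)
  have hcong : ∀ x : ℝ, 0 < x → ∀ t ∈ Ioi (0:ℝ),
      f x t = x ^ β * ((1 - Real.cos t) * Real.exp (-(x * t))) := by
    intro x hx t ht
    rw [hf]; simp only
    rw [mul_comm t x]; ring
  have hintt : ∀ x : ℝ, 0 < x → IntegrableOn (fun t => f x t) (Ioi (0:ℝ)) := by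
    intro x hx
    exact IntegrableOn.congr_fun ((integrableOn_one_sub_cos_exp hx).const_mul (x ^ β))
      (fun t ht => (hcong x hx t ht).symm) measurableSet_Ioi
  have hinner : ∀ x : ℝ, 0 < x →
      ∫ t in Ioi (0:ℝ), f x t = x ^ (β - 1) / (1 + x ^ 2) := by
    intro x hx
    rw [setIntegral_congr_fun measurableSet_Ioi (hcong x hx), integral_const_mul,
      laplace_one_sub_cos hx, Real.rpow_sub hx, Real.rpow_one]
    have h1 : (0:ℝ) < 1 + x ^ 2 := by positivity
    field_simp
    ring
  have hInt : Integrable (Function.uncurry f)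
      ((volume.restrict (Ioi (0:ℝ))).prod (volume.restrict (Ioi (0:ℝ)))) := by
    refine (integrable_prod_iff hmeas).mpr ⟨?_, ?_⟩
    · filter_upwards [ae_restrict_mem measurableSet_Ioi] with x hx
      exact hintt x hx
    · refine (fubiniD hβ0 hβ2).1.congr ?_
      filter_upwards [ae_restrict_mem measurableSet_Ioi] with x hx
      rw [show ∫ t, ‖Function.uncurry f (x, t)‖ ∂(volume.restrict (Ioi (0:ℝ)))
          = ∫ t in Ioi (0:ℝ), f x t from
        integral_congr_ae (by
          filter_upwards with t
          simp [Function.uncurry, Real.norm_eq_abs, abs_of_nonneg (hnonneg x t (le_of_lt hx))])]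
      exact (hinner x hx).symm
  have hswap := integral_integral_swap hInt
  have hL : ∫ x in Ioi (0:ℝ), ∫ t in Ioi (0:ℝ), f x t = π / (2 * Real.sin (π * β / 2)) := by
    rw [setIntegral_congr_fun measurableSet_Ioi (fun x hx => hinner x hx)]
    exact (fubiniD hβ0 hβ2).2
  have hR : ∫ t in Ioi (0:ℝ), ∫ x in Ioi (0:ℝ), f x t
      = Real.Gamma (1 + β) * ∫ t in Ioi (0:ℝ), (1 - Real.cos t) * t ^ (-1 - β) := by
    rw [← integral_const_mul]
    refine setIntegral_congr_fun measurableSet_Ioi (fun t ht => ?_)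
    have : ∫ x in Ioi (0:ℝ), f x t
        = (1 - Real.cos t) * ∫ x in Ioi (0:ℝ), x ^ β * Real.exp (-(t * x)) := by
      rw [← integral_const_mul]
    rw [this, int_rpow_exp hβ0 ht]
    ring
  have hΓ : 0 < Real.Gamma (1 + β) := Real.Gamma_pos_of_pos (by linarith)
  have hsin : 0 < Real.sin (π * β / 2) := by
    apply Real.sin_pos_of_pos_of_lt_pi
    · positivity
    · nlinarith [Real.pi_pos]
  rw [hswap, hR] at hL
  field_simp at hL ⊢
  linarith [hL]

theorem abs_rpow_subordination (β : ℝ) (hβ0 : 0 < β) (hβ2 : β < 2) (u : ℝ) :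
    0 < 2 ^ (1 - β) * Real.Gamma (1 + β) * Real.sin (Real.pi * β / 2) / Real.pi ^ (1 + β) ∧
    |u| ^ β =
      (2 ^ (1 - β) * Real.Gamma (1 + β) * Real.sin (Real.pi * β / 2) / Real.pi ^ (1 + β)) *
        ∫ s in Set.Ioi (0 : ℝ), (1 - Real.cos (2 * Real.pi * u * s)) * s ^ (-1 - β) := by
  have hΓ : 0 < Real.Gamma (1 + β) := Real.Gamma_pos_of_pos (by linarith)
  have hsin : 0 < Real.sin (π * β / 2) := by
    apply Real.sin_pos_of_pos_of_lt_pi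
    · positivity
    · nlinarith [Real.pi_pos]
  have hπ : (0:ℝ) < π := Real.pi_pos
  constructor
  · apply div_pos
    · apply mul_pos (mul_pos (Real.rpow_pos_of_pos two_pos _) hΓ) hsin
    · exact Real.rpow_pos_of_pos hπ _
  rcases eq_or_ne u 0 with rfl | hu
  · rw [show (∫ s in Ioi (0:ℝ), (1 - Real.cos (2 * π * 0 * s)) * s ^ (-1 - β)) = 0 by
      simp]
    simp [Real.zero_rpow hβ0.ne']
  · set c : ℝ := 2 * π * |u| with hc
    have hc0 : 0 < c := by
      have : 0 < |u| := abs_pos.mpr hu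
      positivity
    set G : ℝ → ℝ := fun t => (1 - Real.cos t) * t ^ (-1 - β) with hG
    have step1 : ∫ s in Ioi (0:ℝ), (1 - Real.cos (2 * π * u * s)) * s ^ (-1 - β)
        = c ^ (1 + β) * ∫ s in Ioi (0:ℝ), G (c * s) := by
      rw [← integral_const_mul]
      refine setIntegral_congr_fun measurableSet_Ioi (fun s hs => ?_)
      have hs0 : (0:ℝ) < s := hs
      have hcos : Real.cos (2 * π * u * s) = Real.cos (c * s) := by
        rw [← Real.cos_abs (2 * π * u * s), ← Real.cos_abs (c * s)]
        congr 1
        have h1 : |2 * π * u * s| = 2 * π * |u| * s := by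
          rw [abs_mul, abs_mul, abs_mul, abs_two, abs_of_pos hπ, abs_of_pos hs0]
        have h2 : |c * s| = 2 * π * |u| * s := by
          rw [abs_of_pos (mul_pos hc0 hs0), hc]
        rw [h1, h2]
      have hpow : s ^ (-1 - β) = c ^ (1 + β) * (c * s) ^ (-1 - β) := by
        rw [Real.mul_rpow hc0.le hs0.le, ← mul_assoc, ← Real.rpow_add hc0,
          show (1:ℝ) + β + (-1 - β) = 0 by ring, Real.rpow_zero, one_mul]
      rw [hG]
      simp only
      rw [hcos, hpow]
      ring
    have step2 : ∫ s in Ioi (0:ℝ), G (c * s) = c⁻¹ * ∫ t in Ioi (0:ℝ), G t := by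
      have := integral_comp_mul_left_Ioi G 0 hc0
      rw [mul_zero] at this
      rw [this, smul_eq_mul]
    rw [step1, step2, hG]
    simp only
    rw [J_eq hβ0 hβ2]
    have habs : 0 < |u| := abs_pos.mpr hu
    have e1 : c ^ (1 + β) = c * c ^ β := by
      rw [Real.rpow_add hc0, Real.rpow_one]
    have e2 : c ^ β = 2 ^ β * π ^ β * |u| ^ β := by
      rw [hc, Real.mul_rpow (by positivity) habs.le, Real.mul_rpow (by norm_num) hπ.le]
    have e3 : (2:ℝ) ^ (1 - β) * 2 ^ β = 2 := by
      rw [← Real.rpow_add two_pos]; norm_num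
    have e4 : π ^ (1 + β) = π * π ^ β := by
      rw [Real.rpow_add hπ, Real.rpow_one]
    have hπβ : (0:ℝ) < π ^ β := Real.rpow_pos_of_pos hπ β
    rw [e1, e2, e4]
    field_simp
    rw [mul_comm β π, mul_right_comm, mul_div_cancel_right₀ _ hsin.ne', e3]
end

section
/- Let s ≥ 1 and β ∈ (0,2), and define, for i,j ∈ {1,…,s}, N_{ij} = -∫_{[0,1]^2} sin(2π i x) sin(2π j y) |x-y|^{β} dx dy. Then N is positive definite. -/
open MeasureTheory Real Set

variable {β : ℝ}

noncomputable def domf (β : ℝ) (s : ℝ) : ℝ := min 2 (s^2) * s ^ (-1 - β)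

lemma domf_nonneg (β s : ℝ) (hs : 0 < s) : 0 ≤ domf β s := by
  unfold domf
  have h1 : (0:ℝ) ≤ min 2 (s^2) := le_min (by norm_num) (sq_nonneg s)
  positivity

lemma domf_integrable (hβ0 : 0 < β) (hβ2 : β < 2) :
    IntegrableOn (domf β) (Ioi 0) := by
  have h1 : IntegrableOn (domf β) (Ioc 0 1) := by
    have hint : IntegrableOn (fun s : ℝ => s ^ (1 - β)) (Ioc 0 1) := by
      have := (intervalIntegral.intervalIntegrable_rpow' (a := 0) (b := 1) (r := 1 - β)
        (by linarith)).1
      simpa [MeasureTheory.IntegrableOn, intervalIntegrable_iff,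
        uIoc_of_le (zero_le_one' ℝ)] using this
    refine Integrable.mono hint ?_ ?_
    · apply Measurable.aestronglyMeasurable
      unfold domf
      measurability
    · filter_upwards [ae_restrict_mem measurableSet_Ioc] with s hs
      have hs0 : 0 < s := hs.1
      rw [Real.norm_eq_abs, Real.norm_eq_abs, abs_of_nonneg (domf_nonneg β s hs0),
        abs_of_nonneg (by positivity)]
      unfold domf
      calc min 2 (s^2) * s ^ (-1 - β) ≤ s^2 * s ^ (-1-β) := by
            apply mul_le_mul_of_nonneg_right (min_le_right _ _) (by positivity)
        _ = s ^ (1 - β) := by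
            rw [show (s:ℝ)^2 = s ^ (2:ℝ) by rw [← Real.rpow_natCast]; norm_num,
              ← Real.rpow_add hs0]
            congr 1; ring
  have h2 : IntegrableOn (domf β) (Ioi 1) := by
    have hint : IntegrableOn (fun s : ℝ => 2 * s ^ (-1 - β)) (Ioi 1) :=
      (integrableOn_Ioi_rpow_of_lt (by linarith) one_pos).const_mul 2
    refine Integrable.mono hint ?_ ?_
    · apply Measurable.aestronglyMeasurable
      unfold domf; measurability
    · filter_upwards [ae_restrict_mem measurableSet_Ioi] with s hs
      have hs0 : (0:ℝ) < s := lt_trans one_pos hs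
      rw [Real.norm_eq_abs, Real.norm_eq_abs, abs_of_nonneg (domf_nonneg β s hs0),
        abs_of_nonneg (by positivity)]
      exact mul_le_mul_of_nonneg_right (min_le_left _ _) (by positivity)
  have : Ioi (0:ℝ) = Ioc 0 1 ∪ Ioi 1 := (Ioc_union_Ioi_eq_Ioi (by norm_num)).symm
  rw [this]
  exact h1.union h2

lemma onecos_le_domf (hβ0 : 0 < β) (s : ℝ) (hs : 0 < s) (u : ℝ) (hu : |u| ≤ 1) :
    (1 - Real.cos (u * s)) * s ^ (-1 - β) ≤ domf β s := by
  unfold domf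
  apply mul_le_mul_of_nonneg_right _ (by positivity)
  apply le_min
  · nlinarith [Real.neg_one_le_cos (u*s)]
  · have := Real.one_sub_sq_div_two_le_cos (x := u * s)
    have hu2 : u^2 ≤ 1 := by nlinarith [sq_abs u, abs_nonneg u]
    have h2 : (u*s)^2 ≤ s^2 := by
      rw [mul_pow]; nlinarith [sq_nonneg s]
    nlinarith

noncomputable def gfun (β : ℝ) (t : ℝ) : ℝ := (1 - Real.cos t) * t ^ (-1 - β)

noncomputable def Iconst (β : ℝ) : ℝ := ∫ t in Ioi (0:ℝ), gfun β t

variable {β : ℝ}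

lemma gfun_meas : Measurable (gfun β) := by unfold gfun; measurability

lemma gfun_nonneg {t : ℝ} (ht : 0 < t) : 0 ≤ gfun β t := by
  unfold gfun
  have := Real.cos_le_one t
  have h2 : (0:ℝ) ≤ t ^ (-1-β) := by positivity
  nlinarith

lemma gfun_integrable (hβ0 : 0 < β) (hβ2 : β < 2) : IntegrableOn (gfun β) (Ioi 0) := by
  refine Integrable.mono (domf_integrable hβ0 hβ2) gfun_meas.aestronglyMeasurable ?_
  filter_upwards [ae_restrict_mem measurableSet_Ioi] with t ht
  rw [Real.norm_eq_abs, Real.norm_eq_abs, abs_of_nonneg (gfun_nonneg ht),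
    abs_of_nonneg (domf_nonneg β t ht)]
  have := onecos_le_domf hβ0 t ht 1 (by norm_num)
  simpa [gfun] using this

lemma gfun_cont : ContinuousOn (gfun β) (Ioi 0) := by
  apply ContinuousOn.mul
  · exact (continuous_const.sub Real.continuous_cos).continuousOn
  · intro t ht
    exact (Real.continuousAt_rpow_const t _ (Or.inl (ne_of_gt ht))).continuousWithinAt

lemma Iconst_pos (hβ0 : 0 < β) (hβ2 : β < 2) : 0 < Iconst β := by
  have hsub : (0:ℝ) < ∫ t in (1:ℝ)..2, gfun β t := by
    apply intervalIntegral.intervalIntegral_pos_of_pos_on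
    · apply ContinuousOn.intervalIntegrable
      apply gfun_cont.mono
      intro x hx
      rw [uIcc_of_le (by norm_num)] at hx
      exact lt_of_lt_of_le one_pos hx.1
    · intro x hx
      unfold gfun
      have hx0 : (0:ℝ) < x := lt_trans one_pos hx.1
      have hcos : Real.cos x < 1 := by
        have := Real.cos_lt_cos_of_nonneg_of_le_pi (le_refl 0)
          (le_trans hx.2.le (by nlinarith [Real.pi_gt_three])) hx0
        simpa using this
      have : (0:ℝ) < x ^ (-1-β) := by positivity
      nlinarith
    · norm_num
  have h1 : ∫ t in Ioo (1:ℝ) 2, gfun β t ≤ Iconst β := by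
    apply setIntegral_mono_set (gfun_integrable hβ0 hβ2)
    · filter_upwards [ae_restrict_mem measurableSet_Ioi] with t ht
      exact gfun_nonneg ht
    · filter_upwards with t ht
      exact lt_trans one_pos ht.1
  refine lt_of_lt_of_le ?_ h1
  rw [intervalIntegral.integral_of_le (by norm_num), MeasureTheory.integral_Ioc_eq_integral_Ioo]
    at hsub
  exact hsub

lemma subordination (hβ0 : 0 < β) (hβ2 : β < 2) (u : ℝ) :
    ∫ s in Ioi (0:ℝ), (1 - Real.cos (u * s)) * s ^ (-1 - β) = |u| ^ β * Iconst β := by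
  rcases eq_or_ne u 0 with rfl | hu
  · simp [Real.zero_rpow (ne_of_gt hβ0)]
  · have hc : 0 < |u| := abs_pos.mpr hu
    have key : ∀ s ∈ Ioi (0:ℝ),
        (1 - Real.cos (u * s)) * s ^ (-1 - β) = |u| ^ (1+β) * gfun β (|u| * s) := by
      intro s hs
      have hs0 : (0:ℝ) < s := hs
      unfold gfun
      have hcos : Real.cos (u * s) = Real.cos (|u| * s) := by
        rcases abs_choice u with h | h
        · rw [h]
        · rw [h]; simp [Real.cos_neg, neg_mul]
      rw [hcos, Real.mul_rpow hc.le hs0.le]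
      rw [show |u| ^ (-1-β) = (|u| ^ (1+β))⁻¹ by
        rw [← Real.rpow_neg hc.le]; congr 1; ring]
      field_simp
    rw [setIntegral_congr_fun measurableSet_Ioi key, MeasureTheory.integral_const_mul]
    have := integral_comp_mul_left_Ioi (gfun β) 0 hc
    rw [mul_zero] at this
    rw [this, smul_eq_mul, Iconst]
    rw [show |u|⁻¹ = |u| ^ (-1:ℝ) by rw [Real.rpow_neg_one]]
    rw [← mul_assoc, ← Real.rpow_add hc]
    congr 1
    ring

open intervalIntegral in
lemma cos01 (c : ℝ) (hc : c ≠ 0) : ∫ x in (0:ℝ)..1, Real.cos (c * x) = Real.sin c / c := by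
  rw [integral_comp_mul_left Real.cos hc]
  simp [integral_cos, div_eq_inv_mul]

lemma sin_two_pi_int (k : ℤ) : Real.sin (2 * Real.pi * k) = 0 := by
  have := Real.sin_int_mul_pi (2 * k)
  push_cast at this ⊢
  rw [show 2 * Real.pi * (k:ℝ) = (2:ℝ) * (k:ℝ) * Real.pi by ring]
  exact this

lemma cos01_int (k : ℤ) (hk : k ≠ 0) :
    ∫ x in (0:ℝ)..1, Real.cos (2 * Real.pi * k * x) = 0 := by
  have hc : (2 * Real.pi * (k:ℝ)) ≠ 0 := by
    have := Real.pi_ne_zero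
    have : (k:ℝ) ≠ 0 := Int.cast_ne_zero.mpr hk
    positivity
  rw [cos01 _ hc, sin_two_pi_int k, zero_div]

open intervalIntegral in
lemma sin01 (c : ℝ) (hc : c ≠ 0) :
    ∫ x in (0:ℝ)..1, Real.sin (c * x) = (1 - Real.cos c) / c := by
  rw [integral_comp_mul_left Real.sin hc]
  simp [integral_sin, div_eq_inv_mul]

lemma sin01_nat (n : ℕ) : ∫ x in (0:ℝ)..1, Real.sin (2 * Real.pi * (n+1) * x) = 0 := by
  have hc : (2 * Real.pi * ((n:ℝ)+1)) ≠ 0 := by positivity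
  rw [sin01 _ hc]
  have : Real.cos (2 * Real.pi * ((n:ℝ)+1)) = 1 := by
    have := Real.cos_int_mul_two_pi ((n:ℤ)+1)
    push_cast at this
    rw [show 2 * Real.pi * ((n:ℝ)+1) = ((n:ℝ)+1) * (2*Real.pi) by ring]
    exact this
  rw [this]; norm_num

lemma sin_mul_sin (a b : ℝ) :
    Real.sin a * Real.sin b = (Real.cos (a - b) - Real.cos (a + b)) / 2 := by
  rw [Real.cos_sub, Real.cos_add]; ring

lemma sin_orth (m n : ℕ) :
    ∫ x in (0:ℝ)..1, Real.sin (2 * Real.pi * (m+1) * x) * Real.sin (2 * Real.pi * (n+1) * x)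
      = if m = n then 1/2 else 0 := by
  have key : ∀ x : ℝ, Real.sin (2 * Real.pi * (m+1) * x) * Real.sin (2 * Real.pi * (n+1) * x)
      = (Real.cos (2 * Real.pi * ((m:ℝ) - n) * x) - Real.cos (2 * Real.pi * ((m:ℝ)+n+2) * x)) / 2 := by
    intro x
    rw [sin_mul_sin]
    congr 2 <;> ring_nf
  simp_rw [key]
  have hiconst : IntervalIntegrable (fun x : ℝ => Real.cos (2 * Real.pi * ((m:ℝ) - n) * x))
      volume 0 1 := (Continuous.intervalIntegrable (by continuity) _ _)
  have hiconst2 : IntervalIntegrable (fun x : ℝ => Real.cos (2 * Real.pi * ((m:ℝ)+n+2) * x))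
      volume 0 1 := (Continuous.intervalIntegrable (by continuity) _ _)
  rw [intervalIntegral.integral_div, intervalIntegral.integral_sub hiconst hiconst2]
  have h2 : ∫ x in (0:ℝ)..1, Real.cos (2 * Real.pi * ((m:ℝ)+n+2) * x) = 0 := by
    have := cos01_int ((m:ℤ)+n+2) (by omega)
    push_cast at this
    convert this using 2 with x
  rw [h2]
  by_cases hmn : m = n
  · subst hmn
    simp
  · have h1 : ∫ x in (0:ℝ)..1, Real.cos (2 * Real.pi * ((m:ℝ) - n) * x) = 0 := by
      have := cos01_int ((m:ℤ) - n) (by omega)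
      push_cast at this
      convert this using 2 with x
    rw [h1]
    simp [hmn]

noncomputable def muI : Measure ℝ := volume.restrict (Ioc 0 1)

instance : IsFiniteMeasure muI := by
  unfold muI
  constructor
  rw [Measure.restrict_apply_univ]
  simp [Real.volume_Ioc]

lemma cont_int (f : ℝ → ℝ) (hf : Continuous f) : Integrable f muI := by
  unfold muI
  exact (hf.integrableOn_Icc (a := 0) (b := 1)).mono_set Ioc_subset_Icc_self

noncomputable def Psi {s : ℕ} (a : Fin s → ℝ) (x : ℝ) : ℝ :=
  ∑ i, a i * Real.sin (2 * Real.pi * (i.1 + 1) * x)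

lemma Psi_cont {s : ℕ} (a : Fin s → ℝ) : Continuous (Psi a) := by
  unfold Psi
  exact continuous_finset_sum _ fun i _ => (continuous_const.mul (by continuity))

lemma Psi_bound {s : ℕ} (a : Fin s → ℝ) (x : ℝ) : |Psi a x| ≤ ∑ i, |a i| := by
  unfold Psi
  refine le_trans (Finset.abs_sum_le_sum_abs _ _) ?_
  apply Finset.sum_le_sum
  intro i _
  rw [abs_mul]
  have := Real.abs_sin_le_one (2 * Real.pi * (i.1 + 1) * x)
  nlinarith [abs_nonneg (a i)]

lemma Psi_int {s : ℕ} (a : Fin s → ℝ) : Integrable (Psi a) muI :=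
  cont_int _ (Psi_cont a)

lemma Psi_integral_zero {s : ℕ} (a : Fin s → ℝ) : ∫ x, Psi a x ∂muI = 0 := by
  unfold Psi muI
  rw [← intervalIntegral.integral_of_le (zero_le_one' ℝ)]
  rw [intervalIntegral.integral_finset_sum]
  · apply Finset.sum_eq_zero
    intro i _
    rw [intervalIntegral.integral_const_mul]
    have := sin01_nat i.1
    push_cast at this ⊢
    rw [this, mul_zero]
  · intro i _
    exact (Continuous.intervalIntegrable (by continuity) _ _)
noncomputable def Cc {s : ℕ} (a : Fin s → ℝ) (t : ℝ) : ℝ := ∫ x, Psi a x * Real.cos (t * x) ∂muI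
noncomputable def Ss {s : ℕ} (a : Fin s → ℝ) (t : ℝ) : ℝ := ∫ x, Psi a x * Real.sin (t * x) ∂muI

lemma Cc_cont {s : ℕ} (a : Fin s → ℝ) : Continuous (Cc a) := by
  apply MeasureTheory.continuous_of_dominated (bound := fun _ => ∑ i, |a i|)
  · intro t
    exact ((Psi_cont a).mul (by continuity)).aestronglyMeasurable
  · intro t
    filter_upwards with x
    rw [Real.norm_eq_abs, abs_mul]
    calc |Psi a x| * |Real.cos (t * x)| ≤ |Psi a x| * 1 := by
          exact mul_le_mul_of_nonneg_left (Real.abs_cos_le_one _) (abs_nonneg _)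
      _ ≤ ∑ i, |a i| := by rw [mul_one]; exact Psi_bound a x
  · exact integrable_const _
  · filter_upwards with x
    exact continuous_const.mul (by continuity)

lemma Ss_cont {s : ℕ} (a : Fin s → ℝ) : Continuous (Ss a) := by
  apply MeasureTheory.continuous_of_dominated (bound := fun _ => ∑ i, |a i|)
  · intro t
    exact ((Psi_cont a).mul (by continuity)).aestronglyMeasurable
  · intro t
    filter_upwards with x
    rw [Real.norm_eq_abs, abs_mul]
    calc |Psi a x| * |Real.sin (t * x)| ≤ |Psi a x| * 1 := by
          exact mul_le_mul_of_nonneg_left (Real.abs_sin_le_one _) (abs_nonneg _)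
      _ ≤ ∑ i, |a i| := by rw [mul_one]; exact Psi_bound a x
  · exact integrable_const _
  · filter_upwards with x
    exact continuous_const.mul (by continuity)

lemma Ss_at {s : ℕ} (a : Fin s → ℝ) (k : Fin s) :
    Ss a (2 * Real.pi * (k.1 + 1)) = a k / 2 := by
  unfold Ss muI Psi
  rw [← intervalIntegral.integral_of_le (zero_le_one' ℝ)]
  have : ∀ x : ℝ, (∑ i : Fin s, a i * Real.sin (2 * Real.pi * (i.1 + 1) * x))
      * Real.sin (2 * Real.pi * (k.1 + 1) * x)
      = ∑ i : Fin s, a i * (Real.sin (2 * Real.pi * (i.1 + 1) * x)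
        * Real.sin (2 * Real.pi * (k.1 + 1) * x)) := by
    intro x
    rw [Finset.sum_mul]
    congr 1 with i
    ring
  simp_rw [this]
  rw [intervalIntegral.integral_finset_sum]
  · have : ∀ i : Fin s, i ∈ Finset.univ →
        (∫ x in (0:ℝ)..1, a i * (Real.sin (2 * Real.pi * (i.1 + 1) * x)
          * Real.sin (2 * Real.pi * (k.1 + 1) * x)))
        = a i * (if i.1 = k.1 then (1:ℝ)/2 else 0) := by
      intro i _
      rw [intervalIntegral.integral_const_mul]
      congr 1
      have := sin_orth i.1 k.1
      push_cast at this ⊢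
      rw [this]
    rw [Finset.sum_congr rfl this]
    rw [Finset.sum_eq_single k]
    · simp; ring
    · intro b _ hb
      simp [Fin.val_eq_val, hb]
    · intro h
      exact absurd (Finset.mem_univ k) h
  · intro i _
    exact (Continuous.intervalIntegrable (by continuity) _ _)
lemma inner_double {s : ℕ} (a : Fin s → ℝ) (t : ℝ) :
    ∫ p : ℝ × ℝ, Psi a p.1 * Psi a p.2 * (1 - Real.cos ((p.1 - p.2) * t)) ∂(muI.prod muI)
      = -(Cc a t ^ 2 + Ss a t ^ 2) := by
  have key : ∀ p : ℝ × ℝ, Psi a p.1 * Psi a p.2 * (1 - Real.cos ((p.1 - p.2) * t))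
      = Psi a p.1 * Psi a p.2
        - (Psi a p.1 * Real.cos (t * p.1)) * (Psi a p.2 * Real.cos (t * p.2))
        - (Psi a p.1 * Real.sin (t * p.1)) * (Psi a p.2 * Real.sin (t * p.2)) := by
    intro p
    have : Real.cos ((p.1 - p.2) * t) = Real.cos (t * p.1 - t * p.2) := by ring_nf
    rw [this, Real.cos_sub]
    ring
  simp_rw [key]
  have i1 : Integrable (fun p : ℝ × ℝ => Psi a p.1 * Psi a p.2) (muI.prod muI) :=
    (Psi_int a).mul_prod (Psi_int a)
  have i2 : Integrable (fun p : ℝ × ℝ =>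
      (Psi a p.1 * Real.cos (t * p.1)) * (Psi a p.2 * Real.cos (t * p.2))) (muI.prod muI) :=
    (cont_int (fun x => Psi a x * Real.cos (t * x))
        ((Psi_cont a).mul (Real.continuous_cos.comp (continuous_const.mul continuous_id)))).mul_prod
      (cont_int (fun x => Psi a x * Real.cos (t * x))
        ((Psi_cont a).mul (Real.continuous_cos.comp (continuous_const.mul continuous_id))))
  have i3 : Integrable (fun p : ℝ × ℝ =>
      (Psi a p.1 * Real.sin (t * p.1)) * (Psi a p.2 * Real.sin (t * p.2))) (muI.prod muI) :=
    (cont_int (fun x => Psi a x * Real.sin (t * x))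
        ((Psi_cont a).mul (Real.continuous_sin.comp (continuous_const.mul continuous_id)))).mul_prod
      (cont_int (fun x => Psi a x * Real.sin (t * x))
        ((Psi_cont a).mul (Real.continuous_sin.comp (continuous_const.mul continuous_id))))
  have i12 : Integrable (fun p : ℝ × ℝ => Psi a p.1 * Psi a p.2
      - Psi a p.1 * Real.cos (t * p.1) * (Psi a p.2 * Real.cos (t * p.2))) (muI.prod muI) :=
    i1.sub i2
  rw [integral_sub i12 i3, integral_sub i1 i2]
  rw [integral_prod_mul (μ := muI) (ν := muI) (Psi a) (Psi a),
    integral_prod_mul (μ := muI) (ν := muI) (fun x => Psi a x * Real.cos (t * x))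
      (fun x => Psi a x * Real.cos (t * x)),
    integral_prod_mul (μ := muI) (ν := muI) (fun x => Psi a x * Real.sin (t * x))
      (fun x => Psi a x * Real.sin (t * x))]
  rw [Psi_integral_zero]
  unfold Cc Ss
  ring

lemma prod_integrable {s : ℕ} (a : Fin s → ℝ) {β : ℝ} (hβ0 : 0 < β) (hβ2 : β < 2) :
    Integrable (fun q : (ℝ × ℝ) × ℝ => Psi a q.1.1 * Psi a q.1.2 *
        ((1 - Real.cos ((q.1.1 - q.1.2) * q.2)) * q.2 ^ (-1 - β)))
      ((muI.prod muI).prod (volume.restrict (Ioi 0))) := by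
  set A := ∑ i, |a i| with hA
  have hA0 : 0 ≤ A := Finset.sum_nonneg fun i _ => abs_nonneg _
  apply Integrable.mono' (g := fun q : (ℝ × ℝ) × ℝ => (A * A) * domf β q.2)
  · exact (integrable_const (A * A)).mul_prod (domf_integrable hβ0 hβ2)
  · apply Measurable.aestronglyMeasurable
    have hΨ : Measurable (Psi a) := (Psi_cont a).measurable
    have m1 : Measurable fun q : (ℝ × ℝ) × ℝ => Psi a q.1.1 :=
      hΨ.comp (measurable_fst.comp measurable_fst)
    have m2 : Measurable fun q : (ℝ × ℝ) × ℝ => Psi a q.1.2 :=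
      hΨ.comp (measurable_snd.comp measurable_fst)
    have m3 : Measurable fun q : (ℝ × ℝ) × ℝ => Real.cos ((q.1.1 - q.1.2) * q.2) :=
      Real.measurable_cos.comp (((measurable_fst.comp measurable_fst).sub
        (measurable_snd.comp measurable_fst)).mul measurable_snd)
    have m4 : Measurable fun q : (ℝ × ℝ) × ℝ => q.2 ^ (-1 - β) :=
      measurable_snd.pow_const (-1 - β)
    exact ((m1.mul m2).mul ((measurable_const.sub m3).mul m4))
  · have hset : (muI.prod muI).prod (volume.restrict (Ioi (0:ℝ)))
        = ((volume.prod volume).prod volume).restrict ((Ioc 0 1 ×ˢ Ioc 0 1) ×ˢ Ioi 0) := by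
      unfold muI
      rw [Measure.prod_restrict, Measure.prod_restrict]
    rw [hset]
    filter_upwards [ae_restrict_mem (((measurableSet_Ioc.prod measurableSet_Ioc).prod
      measurableSet_Ioi))] with q hq
    obtain ⟨⟨hx, hy⟩, ht⟩ := hq
    have ht0 : (0:ℝ) < q.2 := ht
    have hxy : |q.1.1 - q.1.2| ≤ 1 := by
      rw [abs_le]
      constructor <;> [nlinarith [hx.1, hx.2, hy.1, hy.2]; nlinarith [hx.1, hx.2, hy.1, hy.2]]
    have hcos : 0 ≤ (1 - Real.cos ((q.1.1 - q.1.2) * q.2)) * q.2 ^ (-1 - β) := by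
      have := Real.cos_le_one ((q.1.1 - q.1.2) * q.2)
      have h2 : (0:ℝ) ≤ q.2 ^ (-1-β) := by positivity
      nlinarith
    rw [Real.norm_eq_abs, abs_mul, abs_of_nonneg hcos]
    have hb := onecos_le_domf hβ0 q.2 ht0 (q.1.1 - q.1.2) hxy
    have habs : |Psi a q.1.1 * Psi a q.1.2| ≤ A * A := by
      rw [abs_mul]
      exact mul_le_mul (Psi_bound a _) (Psi_bound a _) (abs_nonneg _) hA0
    calc |Psi a q.1.1 * Psi a q.1.2| * ((1 - Real.cos ((q.1.1 - q.1.2) * q.2)) * q.2 ^ (-1 - β))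
        ≤ (A * A) * ((1 - Real.cos ((q.1.1 - q.1.2) * q.2)) * q.2 ^ (-1 - β)) :=
          mul_le_mul_of_nonneg_right habs hcos
      _ ≤ (A * A) * domf β q.2 := by
          apply mul_le_mul_of_nonneg_left hb (by positivity)
lemma cont2_int (F : ℝ × ℝ → ℝ) (hF : Continuous F) : Integrable F (muI.prod muI) := by
  unfold muI
  rw [Measure.prod_restrict]
  exact ((hF.continuousOn).integrableOn_compact (isCompact_Icc.prod isCompact_Icc)).mono_set
    (prod_mono Ioc_subset_Icc_self Ioc_subset_Icc_self)

lemma abs_rpow_cont {β : ℝ} (hβ0 : 0 < β) : Continuous fun u : ℝ => |u| ^ β := by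
  rw [continuous_iff_continuousAt]
  intro u
  exact (Real.continuousAt_rpow_const |u| β (Or.inr hβ0.le)).comp continuous_abs.continuousAt

lemma main_identity {s : ℕ} (a : Fin s → ℝ) {β : ℝ} (hβ0 : 0 < β) (hβ2 : β < 2) :
    (-∫ p : ℝ × ℝ, Psi a p.1 * Psi a p.2 * |p.1 - p.2| ^ β ∂(muI.prod muI)
      = (Iconst β)⁻¹ * ∫ t in Ioi (0:ℝ), (Cc a t ^ 2 + Ss a t ^ 2) * t ^ (-1 - β))
    ∧ IntegrableOn (fun t => (Cc a t ^ 2 + Ss a t ^ 2) * t ^ (-1 - β)) (Ioi 0) := by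
  have hI : 0 < Iconst β := Iconst_pos hβ0 hβ2
  have hpt : ∀ p : ℝ × ℝ, Psi a p.1 * Psi a p.2 * |p.1 - p.2| ^ β
      = (Iconst β)⁻¹ * ∫ t in Ioi (0:ℝ),
          Psi a p.1 * Psi a p.2 * ((1 - Real.cos ((p.1 - p.2) * t)) * t ^ (-1 - β)) := by
    intro p
    rw [MeasureTheory.integral_const_mul]
    have : ∫ t in Ioi (0:ℝ), (1 - Real.cos ((p.1 - p.2) * t)) * t ^ (-1 - β)
        = |p.1 - p.2| ^ β * Iconst β := subordination hβ0 hβ2 (p.1 - p.2)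
    rw [this]
    field_simp
  have hswap : ∫ p : ℝ × ℝ, ∫ t in Ioi (0:ℝ),
        Psi a p.1 * Psi a p.2 * ((1 - Real.cos ((p.1 - p.2) * t)) * t ^ (-1 - β)) ∂volume
        ∂(muI.prod muI)
      = ∫ t in Ioi (0:ℝ), ∫ p : ℝ × ℝ,
        Psi a p.1 * Psi a p.2 * ((1 - Real.cos ((p.1 - p.2) * t)) * t ^ (-1 - β))
        ∂(muI.prod muI) ∂volume :=
    MeasureTheory.integral_integral_swap (prod_integrable a hβ0 hβ2)
  have heval : ∀ t ∈ Ioi (0:ℝ), (∫ p : ℝ × ℝ,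
        Psi a p.1 * Psi a p.2 * ((1 - Real.cos ((p.1 - p.2) * t)) * t ^ (-1 - β))
        ∂(muI.prod muI))
      = -((Cc a t ^ 2 + Ss a t ^ 2) * t ^ (-1 - β)) := by
    intro t _
    have hfe : (fun p : ℝ × ℝ =>
        Psi a p.1 * Psi a p.2 * ((1 - Real.cos ((p.1 - p.2) * t)) * t ^ (-1 - β)))
        = fun p : ℝ × ℝ =>
          (Psi a p.1 * Psi a p.2 * (1 - Real.cos ((p.1 - p.2) * t))) * t ^ (-1 - β) := by
      funext p; ring
    rw [hfe, MeasureTheory.integral_mul_const, inner_double]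
    ring
  have hmarg : Integrable (fun t => ∫ p : ℝ × ℝ,
      Psi a p.1 * Psi a p.2 * ((1 - Real.cos ((p.1 - p.2) * t)) * t ^ (-1 - β))
      ∂(muI.prod muI)) (volume.restrict (Ioi 0)) :=
    (prod_integrable a hβ0 hβ2).integral_prod_right
  have hintg : IntegrableOn (fun t => (Cc a t ^ 2 + Ss a t ^ 2) * t ^ (-1 - β)) (Ioi 0) := by
    have : IntegrableOn (fun t => -((Cc a t ^ 2 + Ss a t ^ 2) * t ^ (-1 - β))) (Ioi 0) := by
      apply hmarg.congr
      filter_upwards [ae_restrict_mem measurableSet_Ioi] with t ht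
      exact heval t ht
    exact (this.neg).congr (Filter.Eventually.of_forall fun t => by simp)
  refine ⟨?_, hintg⟩
  calc -∫ p : ℝ × ℝ, Psi a p.1 * Psi a p.2 * |p.1 - p.2| ^ β ∂(muI.prod muI)
      = -∫ p : ℝ × ℝ, ((Iconst β)⁻¹ * ∫ t in Ioi (0:ℝ),
          Psi a p.1 * Psi a p.2 * ((1 - Real.cos ((p.1 - p.2) * t)) * t ^ (-1 - β)))
          ∂(muI.prod muI) := by
        congr 1
        exact integral_congr_ae (Filter.Eventually.of_forall hpt)
    _ = -((Iconst β)⁻¹ * ∫ p : ℝ × ℝ, ∫ t in Ioi (0:ℝ),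
          Psi a p.1 * Psi a p.2 * ((1 - Real.cos ((p.1 - p.2) * t)) * t ^ (-1 - β)) ∂volume
          ∂(muI.prod muI)) := by
        rw [MeasureTheory.integral_const_mul]
    _ = -((Iconst β)⁻¹ * ∫ t in Ioi (0:ℝ), ∫ p : ℝ × ℝ,
          Psi a p.1 * Psi a p.2 * ((1 - Real.cos ((p.1 - p.2) * t)) * t ^ (-1 - β))
          ∂(muI.prod muI) ∂volume) := by rw [hswap]
    _ = -((Iconst β)⁻¹ * ∫ t in Ioi (0:ℝ),
          -((Cc a t ^ 2 + Ss a t ^ 2) * t ^ (-1 - β))) := by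
        rw [setIntegral_congr_fun measurableSet_Ioi heval]
    _ = (Iconst β)⁻¹ * ∫ t in Ioi (0:ℝ), (Cc a t ^ 2 + Ss a t ^ 2) * t ^ (-1 - β) := by
        rw [integral_neg]
        ring
lemma iterated_eq_prod {β : ℝ} (hβ0 : 0 < β) (f g : ℝ → ℝ) (hf : Continuous f)
    (hg : Continuous g) :
    ∫ x in (0:ℝ)..1, ∫ y in (0:ℝ)..1, f x * g y * |x - y| ^ β
      = ∫ p : ℝ × ℝ, f p.1 * g p.2 * |p.1 - p.2| ^ β ∂(muI.prod muI) := by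
  have hcont : Continuous fun p : ℝ × ℝ => f p.1 * g p.2 * |p.1 - p.2| ^ β := by
    apply Continuous.mul
    · exact (hf.comp continuous_fst).mul (hg.comp continuous_snd)
    · exact (abs_rpow_cont hβ0).comp (continuous_fst.sub continuous_snd)
  rw [MeasureTheory.integral_prod _ (cont2_int _ hcont)]
  rw [intervalIntegral.integral_of_le (zero_le_one' ℝ)]
  apply setIntegral_congr_fun measurableSet_Ioc
  intro x _
  dsimp only
  rw [intervalIntegral.integral_of_le (zero_le_one' ℝ)]
  rfl

lemma quadform_eq {s : ℕ} (a : Fin s → ℝ) {β : ℝ} (hβ0 : 0 < β) :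
    ∑ i : Fin s, ∑ j : Fin s, a i * a j *
        (-∫ x in (0:ℝ)..1, ∫ y in (0:ℝ)..1,
          Real.sin (2 * Real.pi * (i.1 + 1) * x) * Real.sin (2 * Real.pi * (j.1 + 1) * y) *
            |x - y| ^ β)
      = -∫ p : ℝ × ℝ, Psi a p.1 * Psi a p.2 * |p.1 - p.2| ^ β ∂(muI.prod muI) := by
  have hKc : Continuous fun p : ℝ × ℝ => |p.1 - p.2| ^ β :=
    (abs_rpow_cont hβ0).comp (continuous_fst.sub continuous_snd)
  have hterm : ∀ i j : Fin s, Integrable (fun p : ℝ × ℝ =>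
      (a i * Real.sin (2 * Real.pi * (i.1 + 1) * p.1)) *
      (a j * Real.sin (2 * Real.pi * (j.1 + 1) * p.2)) * |p.1 - p.2| ^ β) (muI.prod muI) := by
    intro i j
    apply cont2_int
    apply Continuous.mul _ hKc
    exact ((continuous_const.mul
        (Real.continuous_sin.comp (continuous_const.mul continuous_id))).comp continuous_fst).mul
      ((continuous_const.mul
        (Real.continuous_sin.comp (continuous_const.mul continuous_id))).comp continuous_snd)
  have expand : ∀ p : ℝ × ℝ, Psi a p.1 * Psi a p.2 * |p.1 - p.2| ^ β
      = ∑ i : Fin s, ∑ j : Fin s,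
        (a i * Real.sin (2 * Real.pi * (i.1 + 1) * p.1)) *
        (a j * Real.sin (2 * Real.pi * (j.1 + 1) * p.2)) * |p.1 - p.2| ^ β := by
    intro p
    unfold Psi
    rw [Finset.sum_mul_sum]
    rw [Finset.sum_mul]
    congr 1 with i
    rw [Finset.sum_mul]
  calc ∑ i : Fin s, ∑ j : Fin s, a i * a j *
        (-∫ x in (0:ℝ)..1, ∫ y in (0:ℝ)..1,
          Real.sin (2 * Real.pi * (i.1 + 1) * x) * Real.sin (2 * Real.pi * (j.1 + 1) * y) *
            |x - y| ^ β)
      = -∑ i : Fin s, ∑ j : Fin s, ∫ p : ℝ × ℝ,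
          (a i * Real.sin (2 * Real.pi * (i.1 + 1) * p.1)) *
          (a j * Real.sin (2 * Real.pi * (j.1 + 1) * p.2)) * |p.1 - p.2| ^ β
          ∂(muI.prod muI) := by
        rw [← Finset.sum_neg_distrib]
        congr 1 with i
        rw [← Finset.sum_neg_distrib]
        congr 1 with j
        rw [iterated_eq_prod hβ0 (fun x => Real.sin (2 * Real.pi * (i.1 + 1) * x))
          (fun y => Real.sin (2 * Real.pi * (j.1 + 1) * y))
          (Real.continuous_sin.comp (continuous_const.mul continuous_id))
          (Real.continuous_sin.comp (continuous_const.mul continuous_id))]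
        rw [mul_neg, ← MeasureTheory.integral_const_mul (a i * a j)]
        congr 1
        apply integral_congr_ae
        filter_upwards with p
        ring
    _ = -∫ p : ℝ × ℝ, Psi a p.1 * Psi a p.2 * |p.1 - p.2| ^ β ∂(muI.prod muI) := by
        congr 1
        have hin : ∀ i : Fin s,
            (∑ j : Fin s, ∫ p : ℝ × ℝ,
              (a i * Real.sin (2 * Real.pi * (i.1 + 1) * p.1)) *
              (a j * Real.sin (2 * Real.pi * (j.1 + 1) * p.2)) * |p.1 - p.2| ^ β
              ∂(muI.prod muI))
            = ∫ p : ℝ × ℝ, (∑ j : Fin s,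
              (a i * Real.sin (2 * Real.pi * (i.1 + 1) * p.1)) *
              (a j * Real.sin (2 * Real.pi * (j.1 + 1) * p.2)) * |p.1 - p.2| ^ β)
              ∂(muI.prod muI) :=
          fun i => (MeasureTheory.integral_finset_sum _ (fun j _ => hterm i j)).symm
        rw [Finset.sum_congr rfl (fun i _ => hin i),
          ← MeasureTheory.integral_finset_sum _ (fun i _ =>
            MeasureTheory.integrable_finset_sum _ (fun j _ => hterm i j))]
        exact integral_congr_ae (Filter.Eventually.of_forall fun p => (expand p).symm)
lemma final_pos {s : ℕ} (a : Fin s → ℝ) {β : ℝ} (hβ0 : 0 < β) (hβ2 : β < 2)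
    (k : Fin s) (hk : a k ≠ 0) :
    0 < ∫ t in Ioi (0:ℝ), (Cc a t ^ 2 + Ss a t ^ 2) * t ^ (-1 - β) := by
  have hintg := (main_identity a hβ0 hβ2).2
  set h : ℝ → ℝ := fun t => (Cc a t ^ 2 + Ss a t ^ 2) * t ^ (-1 - β) with hh
  set s₀ : ℝ := 2 * Real.pi * (k.1 + 1) with hs₀
  have hs₀pos : 0 < s₀ := by
    have := Real.pi_pos
    positivity
  have hSne : Ss a s₀ ≠ 0 := by
    rw [hs₀, Ss_at a k]
    exact div_ne_zero hk two_ne_zero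
  have hh0 : 0 < h s₀ := by
    apply mul_pos
    · have h1 : 0 < Ss a s₀ ^ 2 := by positivity
      nlinarith [sq_nonneg (Cc a s₀)]
    · exact Real.rpow_pos_of_pos hs₀pos _
  have hcontOn : ContinuousOn h (Ioi 0) := by
    apply ContinuousOn.mul
    · exact (((Cc_cont a).pow 2).add ((Ss_cont a).pow 2)).continuousOn
    · intro t ht
      exact (Real.continuousAt_rpow_const t _ (Or.inl (ne_of_gt ht))).continuousWithinAt
  have hca : ContinuousAt h s₀ := hcontOn.continuousAt (Ioi_mem_nhds hs₀pos)
  have ev : ∀ᶠ x in nhds s₀, 0 < h x := hca.eventually (eventually_gt_nhds hh0)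
  obtain ⟨ε, hε, hball⟩ := Metric.eventually_nhds_iff.mp ev
  set δ : ℝ := min ε s₀ / 2 with hδ
  have hδpos : 0 < δ := by
    have := lt_min hε hs₀pos
    positivity
  have hδε : δ < ε := by
    have : min ε s₀ ≤ ε := min_le_left _ _
    have h2 : 0 < min ε s₀ := lt_min hε hs₀pos
    nlinarith
  have hδs : δ < s₀ := by
    have : min ε s₀ ≤ s₀ := min_le_right _ _
    nlinarith
  set l : ℝ := s₀ - δ with hl
  set r : ℝ := s₀ + δ with hr
  have hl0 : 0 < l := by simp [hl]; linarith
  have hlr : l < r := by simp [hl, hr]; linarith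
  have hsub : uIcc l r ⊆ Ioi (0:ℝ) := by
    rw [uIcc_of_le hlr.le]
    intro x hx
    exact lt_of_lt_of_le hl0 hx.1
  have key : ∀ x ∈ Ioo l r, 0 < h x := by
    intro x hx
    apply hball
    rw [Real.dist_eq, abs_lt]
    constructor
    · simp only [hl] at hx; linarith [hx.1]
    · simp only [hr] at hx; linarith [hx.2]
  have hIoo : 0 < ∫ x in l..r, h x :=
    intervalIntegral.intervalIntegral_pos_of_pos_on
      ((hcontOn.mono hsub).intervalIntegrable) key hlr
  have hmono : ∫ x in Ioo l r, h x ≤ ∫ t in Ioi (0:ℝ), h t := by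
    apply setIntegral_mono_set hintg
    · filter_upwards [ae_restrict_mem measurableSet_Ioi] with t ht
      have ht0 : (0:ℝ) < t := ht
      rw [hh]
      positivity
    · apply HasSubset.Subset.eventuallyLE
      intro x hx
      exact lt_of_lt_of_le hl0 hx.1.le
  calc (0:ℝ) < ∫ x in l..r, h x := hIoo
    _ = ∫ x in Ioo l r, h x := by
        rw [intervalIntegral.integral_of_le hlr.le, MeasureTheory.integral_Ioc_eq_integral_Ioo]
    _ ≤ ∫ t in Ioi (0:ℝ), h t := hmono
theorem power_kernel_sin_matrix_posdef (s : ℕ) (hs : 1 ≤ s) (β : ℝ) (hβ0 : 0 < β) (hβ2 : β < 2)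
    (N : Fin s → Fin s → ℝ)
    (hN : ∀ i j : Fin s, N i j =
      -∫ x in (0:ℝ)..1, ∫ y in (0:ℝ)..1,
        Real.sin (2 * Real.pi * (i.1 + 1) * x) * Real.sin (2 * Real.pi * (j.1 + 1) * y) *
          |x - y| ^ β) :
    ∀ a : Fin s → ℝ, a ≠ 0 → 0 < ∑ i : Fin s, ∑ j : Fin s, a i * a j * N i j := by
  intro a ha
  obtain ⟨k, hk⟩ := Function.ne_iff.mp ha
  have hk' : a k ≠ 0 := hk
  simp_rw [hN]
  rw [quadform_eq a hβ0, (main_identity a hβ0 hβ2).1]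
  exact mul_pos (inv_pos.mpr (Iconst_pos hβ0 hβ2)) (final_pos a hβ0 hβ2 k hk')
end

section
/- Let d ∈ (1/2, 3/2), d ≠ 1, and let c > 0. Then ℓ^{-2d} ∑_{u=0}^{∞} ((1+u)^{d-1} − (1+ℓ+u)^{d-1})^2 → 0 as ℓ → ∞. -/
open Filter Real


lemma rpow_mvt_aux {a b : ℝ} (q : ℝ) (ha : 1 ≤ a) (hab : a ≤ b) :
    ∃ c, a ≤ c ∧ c ≤ b ∧ b ^ q - a ^ q = q * c ^ (q - 1) * (b - a) := by
  rcases eq_or_lt_of_le hab with rfl | hlt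
  · exact ⟨a, le_refl a, le_refl a, by ring⟩
  · have ha0 : (0:ℝ) < a := lt_of_lt_of_le one_pos ha
    have hcont : ContinuousOn (fun x : ℝ => x ^ q) (Set.Icc a b) := by
      intro x hx
      exact (Real.continuousAt_rpow_const x q
        (Or.inl (ne_of_gt (lt_of_lt_of_le ha0 hx.1)))).continuousWithinAt
    have hderiv : ∀ x ∈ Set.Ioo a b, HasDerivAt (fun x : ℝ => x ^ q)
        (q * x ^ (q - 1)) x := by
      intro x hx
      exact Real.hasDerivAt_rpow_const (Or.inl (ne_of_gt (lt_of_lt_of_le ha0 hx.1.le)))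
    obtain ⟨c, hc, hceq⟩ := exists_hasDerivAt_eq_slope (fun x : ℝ => x ^ q)
      (fun x => q * x ^ (q - 1)) hlt hcont hderiv
    refine ⟨c, hc.1.le, hc.2.le, ?_⟩
    have hba : b - a ≠ 0 := sub_ne_zero.mpr (ne_of_gt hlt)
    field_simp at hceq
    linarith [hceq]

lemma rpow_diff_le_aux {a b : ℝ} (q : ℝ) (hq : q ≤ 1) (ha : 1 ≤ a) (hab : a ≤ b) :
    |b ^ q - a ^ q| ≤ |q| * (b - a) * a ^ (q - 1) := by
  obtain ⟨c, hac, hcb, heq⟩ := rpow_mvt_aux q ha hab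
  have ha0 : (0:ℝ) < a := lt_of_lt_of_le one_pos ha
  have hc0 : (0:ℝ) < c := lt_of_lt_of_le ha0 hac
  have hcle : c ^ (q - 1) ≤ a ^ (q - 1) :=
    Real.rpow_le_rpow_of_nonpos ha0 hac (by linarith)
  have hcpos : (0:ℝ) ≤ c ^ (q - 1) := (Real.rpow_pos_of_pos hc0 _).le
  rw [heq, abs_mul, abs_mul, abs_of_nonneg hcpos, abs_of_nonneg (by linarith : (0:ℝ) ≤ b - a)]
  calc |q| * c ^ (q-1) * (b - a) ≤ |q| * a ^ (q-1) * (b - a) := by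
        apply mul_le_mul_of_nonneg_right (mul_le_mul_of_nonneg_left hcle (abs_nonneg q))
        linarith
    _ = |q| * (b - a) * a ^ (q - 1) := by ring

/-- Telescoping tail bound. -/
lemma tsum_rpow_tail_le_aux {L r : ℝ} (hL : 1 ≤ L) (hr : r < -1) :
    ∑' u : ℕ, (L + 1 + (u:ℝ)) ^ r ≤ L ^ (r + 1) / (-(r + 1)) := by
  have hL0 : (0:ℝ) < L := lt_of_lt_of_le one_pos hL
  have hr1 : (0:ℝ) < -(r+1) := by linarith
  apply Real.tsum_le_of_sum_range_le
  · intro n; positivity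
  · intro n
    have key : ∀ u : ℕ, (L + 1 + (u:ℝ)) ^ r ≤
        ((L + u) ^ (r+1) - (L + (u+1:ℕ)) ^ (r+1)) / (-(r+1)) := by
      intro u
      have haL : (1:ℝ) ≤ L + u := by
        have : (0:ℝ) ≤ (u:ℝ) := Nat.cast_nonneg u
        linarith
      obtain ⟨c, hac, hcb, heq⟩ := rpow_mvt_aux (r+1) haL
        (by push_cast; linarith : (L + (u:ℝ)) ≤ L + ((u:ℕ)+1:ℕ))
      have hc0 : (0:ℝ) < c := lt_of_lt_of_le (lt_of_lt_of_le one_pos haL) hac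
      have hcr : (L + 1 + (u:ℝ)) ^ r ≤ c ^ r := by
        apply Real.rpow_le_rpow_of_nonpos hc0 ?_ (by linarith)
        push_cast at hcb ⊢; linarith
      have hdiff : (L + (u:ℝ)) ^ (r+1) - (L + ((u:ℕ)+1:ℕ):ℝ) ^ (r+1)
          = (-(r+1)) * c ^ r := by
        push_cast at heq ⊢
        have : ((L + (u:ℝ)+1)) - (L + u) = 1 := by ring
        rw [show r + 1 - 1 = r by ring] at heq
        nlinarith [heq]
      rw [hdiff]
      rw [mul_comm, mul_div_assoc, div_self (ne_of_gt hr1), mul_one]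
      exact hcr
    calc ∑ u ∈ Finset.range n, (L + 1 + (u:ℝ)) ^ r
        ≤ ∑ u ∈ Finset.range n, ((L + u) ^ (r+1) - (L + (u+1:ℕ)) ^ (r+1)) / (-(r+1)) :=
          Finset.sum_le_sum fun u _ => key u
      _ = (∑ u ∈ Finset.range n, ((L + u) ^ (r+1) - (L + (u+1:ℕ)) ^ (r+1))) / (-(r+1)) := by
          rw [Finset.sum_div]
      _ = ((L + (0:ℕ)) ^ (r+1) - (L + (n:ℕ)) ^ (r+1)) / (-(r+1)) := by
          rw [Finset.sum_range_sub' (fun u : ℕ => (L + (u:ℕ):ℝ) ^ (r+1)) n]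
      _ ≤ L ^ (r + 1) / (-(r + 1)) := by
          apply div_le_div_of_nonneg_right ?_ hr1.le
          have h1 : (0:ℝ) < (L + (n:ℕ):ℝ) ^ (r+1) :=
            Real.rpow_pos_of_pos (by positivity) _
          simp only [Nat.cast_zero, add_zero]
          linarith

set_option maxHeartbeats 1000000 in
theorem tail_coeff_sum_tendsto_zero (d : ℝ) (hd1 : 1 / 2 < d) (hd2 : d < 3 / 2) (hd3 : d ≠ 1)
    (c : ℝ) (hc : 0 < c) :
    Filter.Tendsto
      (fun ℓ : ℕ => (ℓ : ℝ) ^ (-(2 * d)) *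
        ∑' u : ℕ, ((1 + (u : ℝ)) ^ (d - 1) - (1 + (ℓ : ℝ) + u) ^ (d - 1)) ^ 2)
      Filter.atTop (nhds 0) := by
  have hq1 : d - 1 ≤ 1 := by linarith
  have hr : 2 * d - 4 < -1 := by linarith
  -- summability of the base comparison series
  have hbase : Summable (fun u : ℕ => (1 + (u:ℝ)) ^ (2 * d - 4)) := by
    have h0 : Summable (fun u : ℕ => ((u:ℝ)) ^ (2 * d - 4)) :=
      Real.summable_nat_rpow.mpr hr
    have h1 : Summable (fun u : ℕ => (((u + 1 : ℕ)):ℝ) ^ (2 * d - 4)) :=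
      (summable_nat_add_iff 1).mpr h0
    refine h1.congr fun u => ?_
    push_cast
    ring_nf
  -- pointwise MVT bound, valid for any shift s : ℝ with s ≥ 0
  have hpt : ∀ (s : ℝ), 0 ≤ s → ∀ a : ℝ, 1 ≤ a →
      ((a) ^ (d-1) - (a + s) ^ (d-1)) ^ 2 ≤ (d-1)^2 * s^2 * a ^ (2*d-4) := by
    intro s hs a ha
    have hd := rpow_diff_le_aux (d-1) hq1 ha (by linarith : a ≤ a + s)
    have h2 : ((a) ^ (d-1) - (a + s) ^ (d-1)) ^ 2
        = |(a + s) ^ (d-1) - a ^ (d-1)| ^ 2 := by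
      rw [sq_abs]; ring
    rw [h2]
    have hb : |d-1| * (a + s - a) * a ^ (d - 1 - 1) = |d-1| * s * a ^ (d-2) := by
      ring_nf
    rw [hb] at hd
    have hnn : (0:ℝ) ≤ |d-1| * s * a ^ (d-2) := by positivity
    calc |(a + s) ^ (d-1) - a ^ (d-1)| ^ 2 ≤ (|d-1| * s * a ^ (d-2)) ^ 2 := by
          exact pow_le_pow_left₀ (abs_nonneg _) hd 2
      _ = (d-1)^2 * s^2 * a ^ (2*d-4) := by
          have ha0 : (0:ℝ) < a := lt_of_lt_of_le one_pos ha
          have h3 : (a ^ (d-2))^2 = a ^ (2*d-4) := by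
            rw [sq, ← Real.rpow_add ha0, show d-2+(d-2) = 2*d-4 from by ring]
          rw [mul_pow, mul_pow, sq_abs, h3]
  -- summability of the main series for each ℓ
  have hsum : ∀ ℓ : ℕ, Summable (fun u : ℕ =>
      ((1 + (u:ℝ)) ^ (d-1) - (1 + (ℓ:ℝ) + u) ^ (d-1)) ^ 2) := by
    intro ℓ
    apply Summable.of_nonneg_of_le (fun u => sq_nonneg _) ?_ (hbase.mul_left ((d-1)^2 * (ℓ:ℝ)^2))
    intro u
    have h1 : (1:ℝ) ≤ 1 + (u:ℝ) := le_add_of_nonneg_right (Nat.cast_nonneg u)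
    have := hpt (ℓ:ℝ) (Nat.cast_nonneg ℓ) (1 + (u:ℝ)) h1
    calc ((1 + (u:ℝ)) ^ (d-1) - (1 + (ℓ:ℝ) + u) ^ (d-1)) ^ 2
        = ((1 + (u:ℝ)) ^ (d-1) - ((1 + (u:ℝ)) + (ℓ:ℝ)) ^ (d-1)) ^ 2 := by ring_nf
      _ ≤ (d-1)^2 * (ℓ:ℝ)^2 * (1 + (u:ℝ)) ^ (2*d-4) := this
  -- the dominating sequence
  set C : ℝ := 4 * 3 ^ (2*d-2) + (d-1)^2 / (3 - 2*d) with hC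
  apply squeeze_zero' (g := fun ℓ : ℕ => 4 * (ℓ:ℝ) ^ (1 - 2*d) + C * (ℓ:ℝ) ^ (-(1:ℝ)))
  · filter_upwards with ℓ
    exact mul_nonneg (Real.rpow_nonneg (Nat.cast_nonneg ℓ) _)
      (tsum_nonneg fun u => sq_nonneg _)
  · filter_upwards [eventually_ge_atTop 1] with ℓ hℓ
    set X : ℝ := (ℓ:ℝ) with hXdef
    have hX : (1:ℝ) ≤ X := by rw [hXdef]; exact_mod_cast hℓ
    have hX0 : (0:ℝ) < X := lt_of_lt_of_le one_pos hX
    -- split the sum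
    have hsplit := (Summable.sum_add_tsum_nat_add ℓ (hsum ℓ)).symm
    -- head bound
    have haux : ∀ x:ℝ, 1 ≤ x → x ≤ 3*X → (x^(d-1))^2 ≤ 1 + (3*X)^(2*d-2) := by
      intro x hx1 hx3
      have hx0 : (0:ℝ) < x := lt_of_lt_of_le one_pos hx1
      have hsq : (x^(d-1))^2 = x^(2*d-2) := by
        rw [sq, ← Real.rpow_add hx0, show d-1+(d-1) = 2*d-2 from by ring]
      rw [hsq]
      rcases le_or_gt 0 (2*d-2) with h | h
      · have h1 := Real.rpow_le_rpow hx0.le hx3 h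
        linarith
      · have h1 := Real.rpow_le_rpow_of_nonpos one_pos hx1 h.le
        rw [Real.one_rpow] at h1
        have h2 : (0:ℝ) < (3*X)^(2*d-2) := Real.rpow_pos_of_pos (by linarith) _
        linarith
    have hhead : ∑ u ∈ Finset.range ℓ,
        ((1 + (u:ℝ)) ^ (d-1) - (1 + X + u) ^ (d-1)) ^ 2
        ≤ X * (4 * (1 + (3*X)^(2*d-2))) := by
      have hb : ∀ u ∈ Finset.range ℓ,
          ((1 + (u:ℝ)) ^ (d-1) - (1 + X + u) ^ (d-1)) ^ 2
          ≤ 4 * (1 + (3*X)^(2*d-2)) := by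
        intro u hu
        have hu' : (u:ℝ) + 1 ≤ X := by
          rw [hXdef]; exact_mod_cast Nat.succ_le_of_lt (Finset.mem_range.mp hu)
        have ha1 : (1:ℝ) ≤ 1 + (u:ℝ) := le_add_of_nonneg_right (Nat.cast_nonneg u)
        have ha3 : 1 + (u:ℝ) ≤ 3*X := by linarith
        have hb1 : (1:ℝ) ≤ 1 + X + u := by
          have := Nat.cast_nonneg (α := ℝ) u; linarith
        have hb3 : 1 + X + (u:ℝ) ≤ 3*X := by linarith
        have k1 := haux _ ha1 ha3
        have k2 := haux _ hb1 hb3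
        nlinarith [sq_nonneg ((1 + (u:ℝ)) ^ (d-1) + (1 + X + u) ^ (d-1))]
      calc ∑ u ∈ Finset.range ℓ, ((1 + (u:ℝ)) ^ (d-1) - (1 + X + u) ^ (d-1)) ^ 2
          ≤ (Finset.range ℓ).card • (4 * (1 + (3*X)^(2*d-2))) :=
            Finset.sum_le_card_nsmul _ _ _ hb
        _ = X * (4 * (1 + (3*X)^(2*d-2))) := by
            rw [Finset.card_range, nsmul_eq_mul]
    -- tail bound
    have hshift : Summable (fun u : ℕ => (X + 1 + (u:ℝ)) ^ (2*d-4)) := by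
      apply Summable.of_nonneg_of_le (fun u => (Real.rpow_nonneg (by positivity) _)) ?_ hbase
      intro u
      apply Real.rpow_le_rpow_of_nonpos (by positivity) (by linarith [Nat.cast_nonneg (α := ℝ) u]) (by linarith)
    have htail : ∑' u : ℕ, ((1 + ((u + ℓ : ℕ)):ℝ) ^ (d-1) - (1 + X + ((u + ℓ:ℕ)):ℝ) ^ (d-1)) ^ 2
        ≤ (d-1)^2 * X^2 * (X ^ (2*d-3) / (3 - 2*d)) := by
      have hterm : ∀ u : ℕ,
          ((1 + ((u + ℓ : ℕ)):ℝ) ^ (d-1) - (1 + X + ((u + ℓ:ℕ)):ℝ) ^ (d-1)) ^ 2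
          ≤ (d-1)^2 * X^2 * (X + 1 + (u:ℝ)) ^ (2*d-4) := by
        intro u
        have hc : ((u + ℓ : ℕ):ℝ) = (u:ℝ) + X := by push_cast; ring
        have ha1 : (1:ℝ) ≤ 1 + ((u:ℝ) + X) := by
          have := Nat.cast_nonneg (α := ℝ) u; linarith
        have := hpt X hX0.le (1 + ((u:ℝ) + X)) ha1
        calc ((1 + ((u + ℓ : ℕ)):ℝ) ^ (d-1) - (1 + X + ((u + ℓ:ℕ)):ℝ) ^ (d-1)) ^ 2
            = ((1 + ((u:ℝ) + X)) ^ (d-1) - ((1 + ((u:ℝ) + X)) + X) ^ (d-1)) ^ 2 := by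
              rw [hc, show (1 + X + ((u:ℝ) + X)) = (1 + ((u:ℝ) + X)) + X from by ring]
          _ ≤ (d-1)^2 * X^2 * (1 + ((u:ℝ) + X)) ^ (2*d-4) := this
          _ = (d-1)^2 * X^2 * (X + 1 + (u:ℝ)) ^ (2*d-4) := by
              rw [show (1 + ((u:ℝ) + X)) = X + 1 + (u:ℝ) from by ring]
      have hsum2 : Summable (fun u : ℕ =>
          ((1 + ((u + ℓ : ℕ)):ℝ) ^ (d-1) - (1 + X + ((u + ℓ:ℕ)):ℝ) ^ (d-1)) ^ 2) :=
        ((summable_nat_add_iff ℓ).mpr (hsum ℓ)).congr (fun u => by rw [hXdef])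
      calc ∑' u : ℕ, ((1 + ((u + ℓ : ℕ)):ℝ) ^ (d-1) - (1 + X + ((u + ℓ:ℕ)):ℝ) ^ (d-1)) ^ 2
          ≤ ∑' u : ℕ, (d-1)^2 * X^2 * (X + 1 + (u:ℝ)) ^ (2*d-4) :=
            Summable.tsum_le_tsum hterm hsum2 (hshift.mul_left _)
        _ = (d-1)^2 * X^2 * ∑' u : ℕ, (X + 1 + (u:ℝ)) ^ (2*d-4) := tsum_mul_left
        _ ≤ (d-1)^2 * X^2 * (X ^ (2*d-3) / (3 - 2*d)) := by
            apply mul_le_mul_of_nonneg_left ?_ (by positivity)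
            have := tsum_rpow_tail_le_aux (L := X) (r := 2*d-4) hX (by linarith)
            rw [show 2*d-4+1 = 2*d-3 from by ring, show -(2*d-3) = 3-2*d from by ring] at this
            exact this
    -- combine
    have hS : (∑' u : ℕ, ((1 + (u:ℝ)) ^ (d-1) - (1 + X + u) ^ (d-1)) ^ 2)
        ≤ X * (4 * (1 + (3*X)^(2*d-2))) + (d-1)^2 * X^2 * (X ^ (2*d-3) / (3 - 2*d)) := by
      rw [hsplit]
      exact add_le_add hhead htail
    have hmono := mul_le_mul_of_nonneg_left hS (Real.rpow_nonneg hX0.le (-(2*d)))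
    refine le_trans hmono ?_
    -- rpow algebra
    have e0 : (3*X)^(2*d-2) = 3^(2*d-2) * X^(2*d-2) := Real.mul_rpow (by norm_num) hX0.le
    have e1 : X ^ (-(2*d)) * X = X ^ (1-2*d) := by
      rw [← Real.rpow_add_one hX0.ne']
      congr 1; ring
    have e2 : X ^ (-(2*d)) * (X * X^(2*d-2)) = X ^ (-(1:ℝ)) := by
      rw [mul_comm X (X^(2*d-2)), ← Real.rpow_add_one hX0.ne', ← Real.rpow_add hX0]
      congr 1; ring
    have e3 : X ^ (-(2*d)) * (X^(2:ℕ) * X^(2*d-3)) = X ^ (-(1:ℝ)) := by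
      rw [← Real.rpow_natCast X 2, ← Real.rpow_add hX0, ← Real.rpow_add hX0]
      congr 1; push_cast; ring
    rw [e0, hC]
    apply le_of_eq
    linear_combination 4*e1 + 4*(3:ℝ)^(2*d-2)*e2 + ((d-1)^2/(3-2*d))*e3
  · have t1 : Tendsto (fun ℓ:ℕ => (ℓ:ℝ)^(1-2*d)) atTop (nhds 0) := by
      have heq : (fun ℓ:ℕ => (ℓ:ℝ)^(1-2*d))
          = (fun x:ℝ => x^(-(2*d-1))) ∘ (fun ℓ:ℕ => (ℓ:ℝ)) := by
        funext n
        rw [show (1:ℝ)-2*d = -(2*d-1) from by ring]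
        rfl
      rw [heq]
      exact (tendsto_rpow_neg_atTop (by linarith)).comp tendsto_natCast_atTop_atTop
    have t2 : Tendsto (fun ℓ:ℕ => (ℓ:ℝ)^(-(1:ℝ))) atTop (nhds 0) :=
      (tendsto_rpow_neg_atTop one_pos).comp tendsto_natCast_atTop_atTop
    have := (t1.const_mul 4).add (t2.const_mul C)
    simpa using this
end
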